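/- For any given incentive profile u, if f and f̄ are both Wardrop equilibrium flows of a routing game with path-specific node costs (edge and base node costs nonnegative, continuous, nondecreasing), then every path has the same cost under both flows: c_p(f,u) = c_p(f̄,u) for every path p. -/

import Mathlib

open Set MeasureTheory intervalIntegral

section RoutingGame

variable {E V P : Type*} [Fintype E] [Fintype V] [Fintype P] [Nonempty P]
  [DecidableEq E] [DecidableEq V]

/-- Edge flow: total flow of paths containing edge `e`. -/
noncomputable def edgeFlow (pathE : P → Finset E) (f : P → ℝ) (e : E) : ℝ :=
  ∑ p ∈ Finset.univ.filter (fun p => e ∈ pathE p), f p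

/-- Node flow: total flow of paths containing node `v`. -/
noncomputable def nodeFlow (pathV : P → Finset V) (f : P → ℝ) (v : V) : ℝ :=
  ∑ p ∈ Finset.univ.filter (fun p => v ∈ pathV p), f p

/-- Feasible flows: nonnegative, summing to one. -/
def Feasible (f : P → ℝ) : Prop := (∀ p, 0 ≤ f p) ∧ ∑ p, f p = 1

/-- Path cost with additive path-specific node incentives. -/
noncomputable def pathCost (pathE : P → Finset E) (pathV : P → Finset V)
    (ce : E → ℝ → ℝ) (cv : V → ℝ → ℝ) (u : V → P → ℝ) (f : P → ℝ) (p : P) : ℝ :=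
  (∑ e ∈ pathE p, ce e (edgeFlow pathE f e)) +
  (∑ v ∈ pathV p, (cv v (nodeFlow pathV f v) + u v p))

/-- Wardrop equilibrium: every used path has minimal cost. -/
def IsWardrop (pathE : P → Finset E) (pathV : P → Finset V)
    (ce : E → ℝ → ℝ) (cv : V → ℝ → ℝ) (u : V → P → ℝ) (f : P → ℝ) : Prop :=
  ∀ p q : P, 0 < f p →
    pathCost pathE pathV ce cv u f p ≤ pathCost pathE pathV ce cv u f q

/-- The potential function `Φ(f,u)`. -/
noncomputable def potential (pathE : P → Finset E) (pathV : P → Finset V)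
    (ce : E → ℝ → ℝ) (cv : V → ℝ → ℝ) (u : V → P → ℝ) (f : P → ℝ) : ℝ :=
  (∑ e, ∫ s in (0:ℝ)..(edgeFlow pathE f e), ce e s) +
  (∑ v, ∫ s in (0:ℝ)..(nodeFlow pathV f v), cv v s) +
  (∑ p, f p * ∑ v ∈ pathV p, u v p)

/-- Social cost. -/
noncomputable def socialCost (pathE : P → Finset E) (pathV : P → Finset V)
    (ce : E → ℝ → ℝ) (cv : V → ℝ → ℝ) (u : V → P → ℝ) (f : P → ℝ) : ℝ :=
  ∑ p, f p * pathCost pathE pathV ce cv u f p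

end RoutingGame

/-!
A Wardrop equilibrium `f` satisfies the variational inequality `⟨C(f), g - f⟩ ≥ 0` for every
feasible `g`, where `C(f)` is the vector of path costs. Adding the inequalities for `f` and `fbar`
gives `⟨C(f) - C(fbar), f - fbar⟩ ≤ 0`. Regrouped by edges and nodes, the incentives cancel and
this pairing is `∑ₑ (cₑ(fₑ) - cₑ(fbarₑ)) (fₑ - fbarₑ) + ∑ᵥ (cᵥ(fᵥ) - cᵥ(fbarᵥ)) (fᵥ - fbarᵥ)`,
whose terms are nonnegative by monotonicity. So every term vanishes, which forces
`cₑ(fₑ) = cₑ(fbarₑ)` and `cᵥ(fᵥ) = cᵥ(fbarᵥ)`, and the path costs agree.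
-/

section

variable {E V P : Type*} [Fintype P] [DecidableEq E] [DecidableEq V]

theorem MonotoneOn.sub_mul_sub_nonneg {s : Set ℝ} {c : ℝ → ℝ} (hc : MonotoneOn c s)
    {a b : ℝ} (ha : a ∈ s) (hb : b ∈ s) : 0 ≤ (c a - c b) * (a - b) := by
  simpa using (monovaryOn_id_iff.2 hc).sub_mul_sub_nonneg hb ha

theorem Finset.sum_sub_mul_sub_nonneg {ι : Type*} {s : Finset ι} {t : Set ℝ}
    {c : ι → ℝ → ℝ} {x y : ι → ℝ} (hc : ∀ i ∈ s, MonotoneOn (c i) t)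
    (hx : ∀ i ∈ s, x i ∈ t) (hy : ∀ i ∈ s, y i ∈ t) :
    0 ≤ ∑ i ∈ s, (c i (x i) - c i (y i)) * (x i - y i) :=
  Finset.sum_nonneg fun i hi => (hc i hi).sub_mul_sub_nonneg (hx i hi) (hy i hi)

theorem Finset.apply_eq_of_sum_sub_mul_sub_nonpos {ι : Type*} {s : Finset ι} {t : Set ℝ}
    {c : ι → ℝ → ℝ} {x y : ι → ℝ} (hc : ∀ i ∈ s, MonotoneOn (c i) t)
    (hx : ∀ i ∈ s, x i ∈ t) (hy : ∀ i ∈ s, y i ∈ t)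
    (h : ∑ i ∈ s, (c i (x i) - c i (y i)) * (x i - y i) ≤ 0) :
    ∀ i ∈ s, c i (x i) = c i (y i) := by
  have hzero := (Finset.sum_eq_zero_iff_of_nonneg fun i hi =>
    (hc i hi).sub_mul_sub_nonneg (hx i hi) (hy i hi)).1
    (le_antisymm h (Finset.sum_sub_mul_sub_nonneg hc hx hy))
  intro i hi
  rcases mul_eq_zero.1 (hzero i hi) with hcost | hflow
  · exact sub_eq_zero.1 hcost
  · rw [sub_eq_zero.1 hflow]

theorem Feasible.sum_mem_Icc {f : P → ℝ} (hf : Feasible f) (s : Finset P) :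
    ∑ p ∈ s, f p ∈ Set.Icc (0:ℝ) 1 :=
  ⟨Finset.sum_nonneg fun p _ => hf.1 p,
    hf.2 ▸ Finset.sum_le_sum_of_subset_of_nonneg (Finset.subset_univ s) fun p _ _ => hf.1 p⟩

theorem Feasible.sum_mul_le_sum_mul {f g C : P → ℝ} (hf : Feasible f) (hg : Feasible g)
    (hC : ∀ p q, 0 < f p → C p ≤ C q) :
    ∑ p, f p * C p ≤ ∑ p, g p * C p := by
  have hused : ∀ p, f p * C p ≤ f p * ∑ q, g q * C q := by
    intro p
    rcases (hf.1 p).eq_or_lt with hp | hp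
    · simp [← hp]
    · refine mul_le_mul_of_nonneg_left ?_ hp.le
      calc C p = ∑ q, g q * C p := by rw [← Finset.sum_mul, hg.2, one_mul]
        _ ≤ ∑ q, g q * C q :=
          Finset.sum_le_sum fun q _ => mul_le_mul_of_nonneg_left (hC p q hp) (hg.1 q)
  calc ∑ p, f p * C p ≤ ∑ p, f p * ∑ q, g q * C q := Finset.sum_le_sum fun p _ => hused p
    _ = ∑ q, g q * C q := by rw [← Finset.sum_mul, hf.2, one_mul]

theorem Feasible.sum_sub_mul_sub_nonpos {f g C D : P → ℝ} (hf : Feasible f) (hg : Feasible g)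
    (hC : ∀ p q, 0 < f p → C p ≤ C q) (hD : ∀ p q, 0 < g p → D p ≤ D q) :
    ∑ p, (f p - g p) * (C p - D p) ≤ 0 := by
  have hfC := hf.sum_mul_le_sum_mul hg hC
  have hgD := hg.sum_mul_le_sum_mul hf hD
  have hsplit : ∑ p, (f p - g p) * (C p - D p)
      = (∑ p, f p * C p - ∑ p, g p * C p) + (∑ p, g p * D p - ∑ p, f p * D p) := by
    simp only [← Finset.sum_sub_distrib, ← Finset.sum_add_distrib]
    exact Finset.sum_congr rfl fun p _ => by ring
  linarith

theorem Feasible.edgeFlow_mem_Icc {f : P → ℝ} (hf : Feasible f) (pathE : P → Finset E) (e : E) :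
    edgeFlow pathE f e ∈ Set.Icc (0:ℝ) 1 :=
  hf.sum_mem_Icc _

theorem nodeFlow_eq_edgeFlow (pathV : P → Finset V) : nodeFlow pathV = edgeFlow pathV := rfl

theorem edgeFlow_sub (pathE : P → Finset E) (f g : P → ℝ) (e : E) :
    edgeFlow pathE (fun p => f p - g p) e = edgeFlow pathE f e - edgeFlow pathE g e :=
  Finset.sum_sub_distrib _ _

theorem sum_mul_sum_eq_sum_mul_edgeFlow [Fintype E] (pathE : P → Finset E) (g : P → ℝ)
    (a : E → ℝ) :
    ∑ p, g p * ∑ e ∈ pathE p, a e = ∑ e, a e * edgeFlow pathE g e := by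
  simp only [Finset.mul_sum, edgeFlow]
  rw [Finset.sum_comm' (t' := Finset.univ) (s' := fun e => Finset.univ.filter (e ∈ pathE ·))
    (by simp)]
  exact Finset.sum_congr rfl fun e _ => Finset.sum_congr rfl fun p _ => mul_comm _ _

theorem pathCost_sub (pathE : P → Finset E) (pathV : P → Finset V)
    (ce : E → ℝ → ℝ) (cv : V → ℝ → ℝ) (u : V → P → ℝ) (f g : P → ℝ) (p : P) :
    pathCost pathE pathV ce cv u f p - pathCost pathE pathV ce cv u g p
      = ∑ e ∈ pathE p, (ce e (edgeFlow pathE f e) - ce e (edgeFlow pathE g e))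
        + ∑ v ∈ pathV p, (cv v (nodeFlow pathV f v) - cv v (nodeFlow pathV g v)) := by
  simp only [pathCost, Finset.sum_sub_distrib, Finset.sum_add_distrib]
  ring

theorem sum_sub_mul_pathCost_sub [Fintype E] [Fintype V]
    (pathE : P → Finset E) (pathV : P → Finset V)
    (ce : E → ℝ → ℝ) (cv : V → ℝ → ℝ) (u : V → P → ℝ) (f g : P → ℝ) :
    ∑ p, (f p - g p) * (pathCost pathE pathV ce cv u f p - pathCost pathE pathV ce cv u g p)
      = ∑ e, (ce e (edgeFlow pathE f e) - ce e (edgeFlow pathE g e))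
          * (edgeFlow pathE f e - edgeFlow pathE g e)
        + ∑ v, (cv v (nodeFlow pathV f v) - cv v (nodeFlow pathV g v))
          * (nodeFlow pathV f v - nodeFlow pathV g v) := by
  simp only [pathCost_sub, mul_add, Finset.sum_add_distrib, sum_mul_sum_eq_sum_mul_edgeFlow,
    edgeFlow_sub, nodeFlow_eq_edgeFlow]

theorem costs_eq_of_sum_sub_mul_pathCost_sub_nonpos [Fintype E] [Fintype V]
    {pathE : P → Finset E} {pathV : P → Finset V}
    {ce : E → ℝ → ℝ} {cv : V → ℝ → ℝ} {u : V → P → ℝ}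
    (hce_mono : ∀ e, MonotoneOn (ce e) (Set.Icc (0:ℝ) 1))
    (hcv_mono : ∀ v, MonotoneOn (cv v) (Set.Icc (0:ℝ) 1))
    {f g : P → ℝ} (hf : Feasible f) (hg : Feasible g)
    (h : ∑ p, (f p - g p) * (pathCost pathE pathV ce cv u f p - pathCost pathE pathV ce cv u g p)
      ≤ 0) :
    (∀ e, ce e (edgeFlow pathE f e) = ce e (edgeFlow pathE g e)) ∧
      ∀ v, cv v (nodeFlow pathV f v) = cv v (nodeFlow pathV g v) := by
  rw [sum_sub_mul_pathCost_sub] at h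
  have hfE (e : E) (_ : e ∈ Finset.univ) := hf.edgeFlow_mem_Icc pathE e
  have hgE (e : E) (_ : e ∈ Finset.univ) := hg.edgeFlow_mem_Icc pathE e
  have hfV (v : V) (_ : v ∈ Finset.univ) : nodeFlow pathV f v ∈ Set.Icc 0 1 :=
    hf.edgeFlow_mem_Icc pathV v
  have hgV (v : V) (_ : v ∈ Finset.univ) : nodeFlow pathV g v ∈ Set.Icc 0 1 :=
    hg.edgeFlow_mem_Icc pathV v
  have hE := Finset.sum_sub_mul_sub_nonneg (fun e _ => hce_mono e) hfE hgE
  have hV := Finset.sum_sub_mul_sub_nonneg (fun v _ => hcv_mono v) hfV hgV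
  exact ⟨fun e => Finset.apply_eq_of_sum_sub_mul_sub_nonpos (fun e _ => hce_mono e) hfE hgE
      (by linarith) e (Finset.mem_univ e),
    fun v => Finset.apply_eq_of_sum_sub_mul_sub_nonpos (fun v _ => hcv_mono v) hfV hgV
      (by linarith) v (Finset.mem_univ v)⟩

theorem pathCost_eq_of_costs_eq (pathE : P → Finset E) (pathV : P → Finset V)
    (ce : E → ℝ → ℝ) (cv : V → ℝ → ℝ) (u : V → P → ℝ) {f g : P → ℝ}
    (hE : ∀ e, ce e (edgeFlow pathE f e) = ce e (edgeFlow pathE g e))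
    (hV : ∀ v, cv v (nodeFlow pathV f v) = cv v (nodeFlow pathV g v)) (p : P) :
    pathCost pathE pathV ce cv u f p = pathCost pathE pathV ce cv u g p := by
  simp only [pathCost, hE, hV]

end

section RoutingGame

variable {E V P : Type*} [Fintype E] [Fintype V] [Fintype P] [Nonempty P]
  [DecidableEq E] [DecidableEq V]

theorem wardrop_pathCosts_agree_general
    (pathE : P → Finset E) (pathV : P → Finset V)
    (ce : E → ℝ → ℝ) (cv : V → ℝ → ℝ) (u : V → P → ℝ)
    (hce_mono : ∀ e, MonotoneOn (ce e) (Set.Icc (0:ℝ) 1))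
    (hcv_mono : ∀ v, MonotoneOn (cv v) (Set.Icc (0:ℝ) 1))
    (f fbar : P → ℝ) (hf : Feasible f) (hfbar : Feasible fbar)
    (heqf : IsWardrop pathE pathV ce cv u f)
    (heqfbar : IsWardrop pathE pathV ce cv u fbar) :
    ∀ p : P, pathCost pathE pathV ce cv u f p = pathCost pathE pathV ce cv u fbar p := by
  obtain ⟨hE, hV⟩ := costs_eq_of_sum_sub_mul_pathCost_sub_nonpos hce_mono hcv_mono hf hfbar
    (hf.sum_sub_mul_sub_nonpos hfbar heqf heqfbar)
  exact pathCost_eq_of_costs_eq pathE pathV ce cv u hE hV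

/-- Any two Wardrop equilibrium flows give every path the same cost. -/
theorem wardrop_pathCosts_agree
    (pathE : P → Finset E) (pathV : P → Finset V)
    (ce : E → ℝ → ℝ) (cv : V → ℝ → ℝ) (u : V → P → ℝ)
    (hce_nn : ∀ e, ∀ x ∈ Set.Icc (0:ℝ) 1, 0 ≤ ce e x)
    (hce_cont : ∀ e, ContinuousOn (ce e) (Set.Icc (0:ℝ) 1))
    (hce_mono : ∀ e, MonotoneOn (ce e) (Set.Icc (0:ℝ) 1))
    (hcv_nn : ∀ v, ∀ x ∈ Set.Icc (0:ℝ) 1, 0 ≤ cv v x)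
    (hcv_cont : ∀ v, ContinuousOn (cv v) (Set.Icc (0:ℝ) 1))
    (hcv_mono : ∀ v, MonotoneOn (cv v) (Set.Icc (0:ℝ) 1))
    (f fbar : P → ℝ) (hf : Feasible f) (hfbar : Feasible fbar)
    (heqf : IsWardrop pathE pathV ce cv u f)
    (heqfbar : IsWardrop pathE pathV ce cv u fbar) :
    ∀ p : P, pathCost pathE pathV ce cv u f p = pathCost pathE pathV ce cv u fbar p :=
  wardrop_pathCosts_agree_general pathE pathV ce cv u hce_mono hcv_mono f fbar hf hfbar heqf heqfbar

end RoutingGame
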